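/- Assume (A1) and (A2). For every ξ ∈ ℂ, the following are equivalent: (i) there exists a nonzero outgoing solution ψ : ℤ → ℂ² of 𝒰ψ = e^{−iξ}ψ; (ii) e^{−iξ} is a (necessarily nonzero) eigenvalue of 𝒦; (iii) 𝕋₂₂(ξ) = 0. -/

import Mathlib

open Complex Matrix

noncomputable section

/-- states: `ℂ²` -/
abbrev C2 : Type := Fin 2 → ℂ

/-- `P n = |L⟩⟨L| U n` -/
def Pmat (U : ℤ → Matrix (Fin 2) (Fin 2) ℂ) (n : ℤ) : Matrix (Fin 2) (Fin 2) ℂ :=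
  Matrix.of fun i j => if i = 0 then U n 0 j else 0

/-- `Q n = |R⟩⟨R| U n` -/
def Qmat (U : ℤ → Matrix (Fin 2) (Fin 2) ℂ) (n : ℤ) : Matrix (Fin 2) (Fin 2) ℂ :=
  Matrix.of fun i j => if i = 1 then U n 1 j else 0

/-- the time evolution operator `𝒰`: `(𝒰ψ)(n) = P_{n+1}ψ(n+1) + Q_{n-1}ψ(n-1)` -/
def QWop (U : ℤ → Matrix (Fin 2) (Fin 2) ℂ) (ψ : ℤ → C2) : ℤ → C2 :=
  fun n => (Pmat U (n + 1)).mulVec (ψ (n + 1)) + (Qmat U (n - 1)).mulVec (ψ (n - 1))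

/-- all local coins are unitary -/
def CoinsUnitary (U : ℤ → Matrix (Fin 2) (Fin 2) ℂ) : Prop :=
  ∀ n : ℤ, U n ∈ Matrix.unitaryGroup (Fin 2) ℂ

/-- Assumption (A1): `U n = I₂` outside `[n₀] = {0,…,n₀}` -/
def A1 (n0 : ℕ) (U : ℤ → Matrix (Fin 2) (Fin 2) ℂ) : Prop :=
  ∀ n : ℤ, n < 0 ∨ (n0 : ℤ) < n → U n = 1

/-- Assumption (A2): `a n ≠ 0` for all `n` -/
def A2 (U : ℤ → Matrix (Fin 2) (Fin 2) ℂ) : Prop :=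
  ∀ n : ℤ, U n 0 0 ≠ 0

/-- the restriction `𝒦` of `𝒰` to `ℓ²([n₀];ℂ²) ≅ ℂ^{2(n₀+1)}`, as a matrix:
`(𝒦v)(n) = P_{n+1}v(n+1) + Q_{n-1}v(n-1)` with the convention that out-of-range terms vanish. -/
def Kmat (n0 : ℕ) (U : ℤ → Matrix (Fin 2) (Fin 2) ℂ) :
    Matrix (Fin (n0 + 1) × Fin 2) (Fin (n0 + 1) × Fin 2) ℂ :=
  Matrix.of fun p q =>
    (if p.2 = 0 ∧ (q.1 : ℕ) = (p.1 : ℕ) + 1 then U (((p.1 : ℕ) : ℤ) + 1) 0 q.2 else 0) +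
    (if p.2 = 1 ∧ (q.1 : ℕ) + 1 = (p.1 : ℕ) then U ((q.1 : ℕ) : ℤ) 1 q.2 else 0)

/-- `μ` is an eigenvalue of `𝒦` -/
def HasEig (n0 : ℕ) (U : ℤ → Matrix (Fin 2) (Fin 2) ℂ) (μ : ℂ) : Prop :=
  ∃ v : Fin (n0 + 1) × Fin 2 → ℂ, v ≠ 0 ∧ (Kmat n0 U).mulVec v = μ • v

/-- the algebraic multiplicity of `μ` as an eigenvalue of `𝒦`:
`dim ker (𝒦 - μI)^{2(n₀+1)}` -/
def algMult (n0 : ℕ) (U : ℤ → Matrix (Fin 2) (Fin 2) ℂ) (μ : ℂ) : ℕ :=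
  Module.finrank ℂ
    (LinearMap.ker (Matrix.mulVecLin ((Kmat n0 U - μ • 1) ^ (2 * (n0 + 1)))))

/-- `ψ` solves the generalized eigenvalue equation `𝒰ψ = μψ` (pointwise on `ℤ`) -/
def IsSol (U : ℤ → Matrix (Fin 2) (Fin 2) ℂ) (μ : ℂ) (ψ : ℤ → C2) : Prop :=
  ∀ n : ℤ, QWop U ψ n = μ • ψ n

/-- the local transfer matrix `T n ξ` -/
def Tmat (U : ℤ → Matrix (Fin 2) (Fin 2) ℂ) (ξ : ℂ) (n : ℤ) : Matrix (Fin 2) (Fin 2) ℂ :=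
  !![Complex.exp (Complex.I * ξ) / (starRingEnd ℂ) (U n 0 0),
      -((starRingEnd ℂ) (U n 1 0)) / (starRingEnd ℂ) (U n 0 0);
    -(U n 1 0) / U n 1 1, Complex.exp (-(Complex.I * ξ)) / U n 1 1]

/-- the global transfer matrix `𝕋(ξ) = T₀(ξ)T₁(ξ)⋯T_{n₀}(ξ)` -/
def TT (n0 : ℕ) (U : ℤ → Matrix (Fin 2) (Fin 2) ℂ) (ξ : ℂ) : Matrix (Fin 2) (Fin 2) ℂ :=
  ((List.range (n0 + 1)).map fun k => Tmat U ξ (k : ℤ)).prod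

/-- the Wronskian-type determinant `𝒲_n(ψ₁,ψ₂) = det(Π_nψ₁, Π_nψ₂)` where
`Π_nψ = (⟨L|ψ(n)⟩, ⟨R|ψ(n+1)⟩)ᵀ` -/
def Wr (ψ₁ ψ₂ : ℤ → C2) (n : ℤ) : ℂ :=
  ψ₁ n 0 * ψ₂ (n + 1) 1 - ψ₂ n 0 * ψ₁ (n + 1) 1

/-- outgoing state -/
def Outgoing (n0 : ℕ) (ψ : ℤ → C2) : Prop :=
  ∀ n : ℕ, ψ (-(n : ℤ)) 1 = 0 ∧ ψ ((n0 : ℤ) + n) 0 = 0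

/-- member of `ℋ^out_N` -/
def OutgoingFrom (n0 : ℕ) (N : ℕ) (ψ : ℤ → C2) : Prop :=
  ∀ n : ℕ, N ≤ n → ψ (-(n : ℤ)) 1 = 0 ∧ ψ ((n0 : ℤ) + n) 0 = 0

/-- incoming state -/
def Incoming (n0 : ℕ) (φ : ℤ → C2) : Prop :=
  ∀ n : ℕ, φ (-(n : ℤ)) 0 = 0 ∧ φ ((n0 : ℤ) + n) 1 = 0

/-- the pairing `⟨φ, ψ⟩ = Σ_{n∈ℤ} (φ(n), ψ(n))_{ℂ²}` -/
def pairing (φ ψ : ℤ → C2) : ℂ :=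
  ∑' n : ℤ, ∑ i : Fin 2, (starRingEnd ℂ) (φ n i) * ψ n i

/-- restriction of a state to `[n₀]` -/
def resK (n0 : ℕ) (ψ : ℤ → C2) : Fin (n0 + 1) × Fin 2 → ℂ :=
  fun p => ψ ((p.1 : ℕ) : ℤ) p.2

/-- the Jost solution `ψ_out^-(·;ξ)`: solution equal to `e^{-inξ}|L⟩` for `n ≤ -1` -/
def JostOutMinus (U : ℤ → Matrix (Fin 2) (Fin 2) ℂ) (ξ : ℂ) (ψ : ℤ → C2) : Prop :=
  IsSol U (Complex.exp (-(Complex.I * ξ))) ψ ∧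
    ∀ n : ℤ, n ≤ -1 → ψ n = ![Complex.exp (-(Complex.I * (n : ℂ) * ξ)), 0]

/-- the Jost solution `ψ_out^+(·;ξ)`: solution equal to `e^{inξ}|R⟩` for `n ≥ n₀+1` -/
def JostOutPlus (n0 : ℕ) (U : ℤ → Matrix (Fin 2) (Fin 2) ℂ) (ξ : ℂ) (ψ : ℤ → C2) : Prop :=
  IsSol U (Complex.exp (-(Complex.I * ξ))) ψ ∧
    ∀ n : ℤ, (n0 : ℤ) + 1 ≤ n → ψ n = ![0, Complex.exp (Complex.I * (n : ℂ) * ξ)]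

/-- the Jost solution `ψ_in^-(·;ξ)`: solution equal to `e^{inξ}|R⟩` for `n ≤ -1` -/
def JostInMinus (U : ℤ → Matrix (Fin 2) (Fin 2) ℂ) (ξ : ℂ) (ψ : ℤ → C2) : Prop :=
  IsSol U (Complex.exp (-(Complex.I * ξ))) ψ ∧
    ∀ n : ℤ, n ≤ -1 → ψ n = ![0, Complex.exp (Complex.I * (n : ℂ) * ξ)]

/-- the Jost solution `ψ_in^+(·;ξ)`: solution equal to `e^{-inξ}|L⟩` for `n ≥ n₀+1` -/
def JostInPlus (n0 : ℕ) (U : ℤ → Matrix (Fin 2) (Fin 2) ℂ) (ξ : ℂ) (ψ : ℤ → C2) : Prop :=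
  IsSol U (Complex.exp (-(Complex.I * ξ))) ψ ∧
    ∀ n : ℤ, (n0 : ℤ) + 1 ≤ n → ψ n = ![Complex.exp (-(Complex.I * (n : ℂ) * ξ)), 0]

/-! Write `μ = e^{-iξ}`. Since every coin is unitary with `a_n ≠ 0`, the eigenvalue equation
`𝒰ψ = μψ` at site `n` is equivalent to the transfer relation `Π_{n-1}ψ = T_n(ξ) Π_nψ`, where
`Π_nψ = (⟨L|ψ(n)⟩, ⟨R|ψ(n+1)⟩)`. Hence a solution vanishing at one site vanishes identically, and
`Π_{-1}ψ = 𝕋(ξ) Π_{n₀}ψ`. For an outgoing solution `Π_{n₀}ψ = (0, y)` and `Π_{-1}ψ = (x, 0)` with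
`y ≠ 0` unless `ψ = 0`, which forces `𝕋₂₂(ξ) = 0`; conversely, if `𝕋₂₂(ξ) = 0`, running the
transfer recursion backwards from `(0, 1)` produces an outgoing solution.

On outgoing states `𝒦` is the compression of `𝒰` to `[n₀]`, so the restriction of an outgoing
solution is an eigenvector of `𝒦`. Conversely an eigenvector extends to an outgoing solution by
geometric sequences outside `[n₀]`, where the coins are trivial. -/

lemma conj_mul_add_conj_mul_of_mem_unitaryGroup {M : Matrix (Fin 2) (Fin 2) ℂ}
    (hM : M ∈ unitaryGroup (Fin 2) ℂ) (i j : Fin 2) :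
    starRingEnd ℂ (M 0 i) * M 0 j + starRingEnd ℂ (M 1 i) * M 1 j = if i = j then 1 else 0 := by
  simpa [mul_apply, Fin.sum_univ_two, one_apply] using
    congrFun (congrFun (mem_unitaryGroup_iff'.mp hM) i) j

lemma apply_one_one_ne_zero_of_mem_unitaryGroup {M : Matrix (Fin 2) (Fin 2) ℂ}
    (hM : M ∈ unitaryGroup (Fin 2) ℂ) (ha : M 0 0 ≠ 0) : M 1 1 ≠ 0 := by
  intro hd
  have horth := conj_mul_add_conj_mul_of_mem_unitaryGroup hM 0 1
  have hnorm := conj_mul_add_conj_mul_of_mem_unitaryGroup hM 1 1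
  simp [hd, ha] at horth
  simp [hd, horth] at hnorm

section QuantumWalk

variable {n0 : ℕ} {U : ℤ → Matrix (Fin 2) (Fin 2) ℂ}

lemma QWop_apply_zero (ψ : ℤ → C2) (n : ℤ) : QWop U ψ n 0 = (U (n + 1) *ᵥ ψ (n + 1)) 0 := by
  simp [QWop, Pmat, Qmat, mulVec, dotProduct]

lemma QWop_apply_one (ψ : ℤ → C2) (n : ℤ) : QWop U ψ n 1 = (U (n - 1) *ᵥ ψ (n - 1)) 1 := by
  simp [QWop, Pmat, Qmat, mulVec, dotProduct]

lemma isSol_iff_forall_mulVec {μ : ℂ} {ψ : ℤ → C2} :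
    IsSol U μ ψ ↔ ∀ n, U n *ᵥ ψ n = μ • ![ψ (n - 1) 0, ψ (n + 1) 1] := by
  simp only [IsSol, funext_iff, Fin.forall_fin_two, Pi.smul_apply, smul_eq_mul,
    QWop_apply_zero, QWop_apply_one, cons_val_zero, cons_val_one]
  constructor
  · intro h n
    exact ⟨by simpa using (h (n - 1)).1, by simpa using (h (n + 1)).2⟩
  · intro h n
    exact ⟨by simpa using (h (n + 1)).1, by simpa using (h (n - 1)).2⟩

theorem IsSol.eq_zero_of_apply_eq_zero {μ : ℂ} {ψ : ℤ → C2} (hU : CoinsUnitary U) (hA2 : A2 U)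
    (hμ : μ ≠ 0) (hψ : IsSol U μ ψ) {m : ℤ} (hm : ψ m = 0) : ψ = 0 := by
  have site := isSol_iff_forall_mulVec.mp hψ
  have up : ∀ n, ψ n = 0 → ψ (n + 1) = 0 := by
    intro n hn
    have h1 := congrFun (site n) 1
    have h0 := congrFun (site (n + 1)) 0
    simp [hn, hμ, mulVec, dotProduct] at h1 h0
    simp [h1, hA2 (n + 1)] at h0
    ext i; fin_cases i <;> simp [h0, h1]
  have down : ∀ n, ψ n = 0 → ψ (n - 1) = 0 := by
    intro n hn
    have h0 := congrFun (site n) 0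
    have h1 := congrFun (site (n - 1)) 1
    simp [hn, hμ, mulVec, dotProduct] at h0 h1
    simp [h0, apply_one_one_ne_zero_of_mem_unitaryGroup (hU (n - 1)) (hA2 (n - 1))] at h1
    ext i; fin_cases i <;> simp [h0, h1]
  funext n
  induction n using Int.inductionOn' with
  | b => exact m
  | zero => exact hm
  | succ k _ ih => exact up k ih
  | pred k _ ih => exact down k ih

lemma mulVec_eq_smul_iff_eq_Tmat_mulVec {n : ℤ} (hU : U n ∈ unitaryGroup (Fin 2) ℂ)
    (ha : U n 0 0 ≠ 0) (ξ : ℂ) (x : C2) (p q : ℂ) :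
    U n *ᵥ x = exp (-(I * ξ)) • ![p, q] ↔ ![p, x 1] = Tmat U ξ n *ᵥ ![x 0, q] := by
  have hd := apply_one_one_ne_zero_of_mem_unitaryGroup hU ha
  have ha' : starRingEnd ℂ (U n 0 0) ≠ 0 := by simpa using ha
  have hnorm := conj_mul_add_conj_mul_of_mem_unitaryGroup hU 0 0
  have horth := conj_mul_add_conj_mul_of_mem_unitaryGroup hU 0 1
  have hμ : exp (-(I * ξ)) * exp (I * ξ) = 1 := by rw [← exp_add]; simp
  simp only [if_true, if_neg zero_ne_one] at hnorm horth
  simp only [funext_iff, Fin.forall_fin_two, mulVec, dotProduct, Fin.sum_univ_two, Tmat,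
    Pi.smul_apply, smul_eq_mul, of_apply, cons_val', cons_val_zero, cons_val_one, empty_val',
    cons_val_fin_one]
  constructor
  · rintro ⟨h0, h1⟩
    constructor
    · have hG : exp (-(I * ξ)) * (p * starRingEnd ℂ (U n 0 0) - exp (I * ξ) * x 0
          + starRingEnd ℂ (U n 1 0) * q) = 0 := by
        linear_combination x 0 * hnorm + x 1 * horth - x 0 * hμ
          - starRingEnd ℂ (U n 0 0) * h0 - starRingEnd ℂ (U n 1 0) * h1
      field_simp
      linear_combination (mul_eq_zero.mp hG).resolve_left (exp_ne_zero _)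
    · field_simp
      linear_combination h1
  · rintro ⟨rfl, h1⟩
    rw [h1]
    constructor
    · field_simp
      linear_combination (U n 1 1 * x 0) * hnorm + (exp (-(I * ξ)) * q - U n 1 0 * x 0) * horth
        - U n 1 1 * x 0 * hμ
    · field_simp
      ring

lemma Tmat_of_eq_one {ξ : ℂ} {n : ℤ} (h : U n = 1) :
    Tmat U ξ n = diagonal ![exp (I * ξ), exp (-(I * ξ))] := by
  ext i j
  fin_cases i <;> fin_cases j <;> simp [Tmat, h]

lemma TT_zero (ξ : ℂ) : TT 0 U ξ = Tmat U ξ 0 := by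
  simp [TT]

lemma TT_succ (m : ℕ) (ξ : ℂ) : TT (m + 1) U ξ = TT m U ξ * Tmat U ξ (m + 1) := by
  simp [TT, List.range_succ, List.prod_append, mul_assoc]

/-- The paper's `Π_n ψ`. -/
def piVec (ψ : ℤ → C2) (n : ℤ) : C2 := ![ψ n 0, ψ (n + 1) 1]

def ofPiVec (w : ℤ → C2) (n : ℤ) : C2 := ![w n 0, w (n - 1) 1]

lemma piVec_ofPiVec (w : ℤ → C2) : piVec (ofPiVec w) = w := by
  ext n i
  fin_cases i <;> simp [piVec, ofPiVec]

lemma isSol_iff_forall_piVec (hU : CoinsUnitary U) (hA2 : A2 U) (ξ : ℂ) (ψ : ℤ → C2) :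
    IsSol U (exp (-(I * ξ))) ψ ↔ ∀ n, piVec ψ (n - 1) = Tmat U ξ n *ᵥ piVec ψ n := by
  rw [isSol_iff_forall_mulVec]
  refine forall_congr' fun n => ?_
  rw [mulVec_eq_smul_iff_eq_Tmat_mulVec (hU n) (hA2 n), piVec, piVec, sub_add_cancel]

lemma eq_TT_mulVec_of_transfer {ξ : ℂ} {w : ℤ → C2}
    (hw : ∀ n, w (n - 1) = Tmat U ξ n *ᵥ w n) (m : ℕ) : w (-1) = TT m U ξ *ᵥ w m := by
  induction m with
  | zero => simpa [TT_zero] using hw 0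
  | succ m ih => rw [ih, TT_succ, ← mulVec_mulVec, Nat.cast_succ, ← hw, add_sub_cancel_right]

theorem TT_one_one_eq_zero_of_outgoing (hU : CoinsUnitary U) (hA2 : A2 U) {ξ : ℂ}
    {ψ : ℤ → C2} (hψ : IsSol U (exp (-(I * ξ))) ψ) (hout : Outgoing n0 ψ) (hne : ψ ≠ 0) :
    TT n0 U ξ 1 1 = 0 := by
  have hy : ψ (n0 + 1) 1 ≠ 0 := by
    refine fun hy => hne (hψ.eq_zero_of_apply_eq_zero hU hA2 (exp_ne_zero _) (m := n0 + 1) ?_)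
    ext i
    fin_cases i
    · simpa using (hout 1).2
    · exact hy
  have htr := congrFun
    (eq_TT_mulVec_of_transfer ((isSol_iff_forall_piVec hU hA2 ξ ψ).mp hψ) n0) 1
  have hL : ψ 0 1 = 0 := by simpa using (hout 0).1
  have hR : ψ n0 0 = 0 := by simpa using (hout 0).2
  simpa [piVec, mulVec, dotProduct, Fin.sum_univ_two, hL, hR, hy] using htr

def backwardTransfer (U : ℤ → Matrix (Fin 2) (Fin 2) ℂ) (ξ : ℂ) (N : ℤ) (x : C2) : ℕ → C2
  | 0 => x
  | k + 1 => Tmat U ξ (N - k) *ᵥ backwardTransfer U ξ N x k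

/-- `Π_n` of the solution with `Π_{n₀} = (0, 1)`: the transfer recursion run backwards below
`n₀`, and the free outgoing wave `(0, e^{i(n-n₀)ξ})` above. -/
def outgoingTransferSeq (n0 : ℕ) (U : ℤ → Matrix (Fin 2) (Fin 2) ℂ) (ξ : ℂ) (n : ℤ) : C2 :=
  if n ≤ n0 then backwardTransfer U ξ n0 ![0, 1] (n0 - n).toNat
  else ![0, exp (-(I * ξ)) ^ ((n0 : ℤ) - n)]

lemma outgoingTransferSeq_of_le {ξ : ℂ} {n : ℤ} (h : n0 ≤ n) :
    outgoingTransferSeq n0 U ξ n = ![0, exp (-(I * ξ)) ^ ((n0 : ℤ) - n)] := by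
  rcases h.eq_or_lt with rfl | hlt
  · simp [outgoingTransferSeq, backwardTransfer]
  · simp [outgoingTransferSeq, not_le.mpr hlt]

lemma outgoingTransferSeq_sub_one (hA1 : A1 n0 U) (ξ : ℂ) (n : ℤ) :
    outgoingTransferSeq n0 U ξ (n - 1) = Tmat U ξ n *ᵥ outgoingTransferSeq n0 U ξ n := by
  by_cases hn : n ≤ n0
  · have hk : ((n0 : ℤ) - (n - 1)).toNat = ((n0 : ℤ) - n).toNat + 1 := by omega
    have hN : (n0 : ℤ) - (((n0 : ℤ) - n).toNat : ℕ) = n := by omega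
    simp only [outgoingTransferSeq, if_pos hn, if_pos (show n - 1 ≤ n0 by omega), hk,
      backwardTransfer, hN]
  · rw [outgoingTransferSeq_of_le (by omega), outgoingTransferSeq_of_le (by omega),
      Tmat_of_eq_one (hA1 n (.inr (by omega)))]
    ext i
    fin_cases i
    · simp
    · simp [sub_sub_eq_add_sub, add_sub_right_comm, zpow_add_one₀ (exp_ne_zero _), mul_comm]

lemma outgoingTransferSeq_apply_one_eq_zero (hA1 : A1 n0 U) {ξ : ℂ} (hTT : TT n0 U ξ 1 1 = 0)
    {n : ℤ} (hn : n ≤ -1) : outgoingTransferSeq n0 U ξ n 1 = 0 := by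
  induction n, hn using Int.leInductionDown with
  | base =>
    rw [eq_TT_mulVec_of_transfer (outgoingTransferSeq_sub_one hA1 ξ) n0,
      outgoingTransferSeq_of_le le_rfl]
    simp [mulVec, dotProduct, hTT]
  | pred n hn ih =>
    rw [outgoingTransferSeq_sub_one hA1, Tmat_of_eq_one (hA1 n (.inl (by omega)))]
    simp [mulVec_diagonal, ih]

theorem exists_outgoing_of_TT_one_one_eq_zero (hU : CoinsUnitary U) (hA1 : A1 n0 U)
    (hA2 : A2 U) {ξ : ℂ} (hTT : TT n0 U ξ 1 1 = 0) :
    ∃ ψ : ℤ → C2, ψ ≠ 0 ∧ Outgoing n0 ψ ∧ IsSol U (exp (-(I * ξ))) ψ := by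
  set w := outgoingTransferSeq n0 U ξ
  refine ⟨ofPiVec w, fun h => ?_, fun k => ⟨?_, ?_⟩, ?_⟩
  · have h1 := congrFun (congrFun h (n0 + 1)) 1
    simp [ofPiVec, w, outgoingTransferSeq_of_le] at h1
  · simpa [ofPiVec, w] using outgoingTransferSeq_apply_one_eq_zero hA1 hTT (n := -k - 1) (by omega)
  · simp [ofPiVec, w, outgoingTransferSeq_of_le]
  · rw [isSol_iff_forall_piVec hU hA2, piVec_ofPiVec]
    exact outgoingTransferSeq_sub_one hA1 ξ

lemma Kmat_mulVec_resK_zero (ψ : ℤ → C2) (m : Fin (n0 + 1)) :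
    (Kmat n0 U *ᵥ resK n0 ψ) (m, 0) = if (m : ℕ) < n0 then QWop U ψ m 0 else 0 := by
  have : (Kmat n0 U *ᵥ resK n0 ψ) (m, 0) = ∑ q : Fin (n0 + 1),
      if (q : ℕ) = m + 1 then (U (m + 1) *ᵥ ψ q) 0 else 0 := by
    simp [Kmat, resK, mulVec, dotProduct, Fintype.sum_prod_type, Fin.sum_univ_two]
  rw [this, Fin.sum_univ_eq_sum_range
    (fun q => if q = (m : ℕ) + 1 then (U (m + 1) *ᵥ ψ q) 0 else 0), Finset.sum_ite_eq',
    QWop_apply_zero]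
  simp

lemma Kmat_mulVec_resK_one (ψ : ℤ → C2) (m : Fin (n0 + 1)) :
    (Kmat n0 U *ᵥ resK n0 ψ) (m, 1) = if 0 < (m : ℕ) then QWop U ψ m 1 else 0 := by
  have : (Kmat n0 U *ᵥ resK n0 ψ) (m, 1) = ∑ q : Fin (n0 + 1),
      if (q : ℕ) + 1 = m then (U q *ᵥ ψ q) 1 else 0 := by
    simp [Kmat, resK, mulVec, dotProduct, Fintype.sum_prod_type, Fin.sum_univ_two]
  rw [this, Fin.sum_univ_eq_sum_range (fun q => if q + 1 = (m : ℕ) then (U q *ᵥ ψ q) 1 else 0)]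
  rcases Nat.eq_zero_or_eq_succ_pred (m : ℕ) with hm | hm
  · simp [hm]
  · rw [hm]
    simp only [Nat.succ_inj, Finset.sum_ite_eq', QWop_apply_one]
    simp

lemma Kmat_mulVec_resK_of_outgoing (hA1 : A1 n0 U) {ψ : ℤ → C2} (hout : Outgoing n0 ψ) :
    Kmat n0 U *ᵥ resK n0 ψ = resK n0 (QWop U ψ) := by
  ext ⟨m, i⟩
  revert i
  refine Fin.forall_fin_two.mpr ⟨?_, ?_⟩
  · rw [Kmat_mulVec_resK_zero]
    split_ifs with h
    · rfl
    · have hm : (m : ℕ) = n0 := by omega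
      have hR : ψ (n0 + 1) 0 = 0 := by simpa using (hout 1).2
      simp [resK, hm, QWop_apply_zero, hA1 (n0 + 1) (.inr (by omega)), hR]
  · rw [Kmat_mulVec_resK_one]
    split_ifs with h
    · rfl
    · have hm : (m : ℕ) = 0 := by omega
      have hL : ψ (-1) 1 = 0 := by simpa using (hout 1).1
      simp [resK, hm, QWop_apply_one, hA1 (-1) (.inl (by omega)), hL]

theorem hasEig_of_outgoing (hU : CoinsUnitary U) (hA1 : A1 n0 U) (hA2 : A2 U) {μ : ℂ}
    (hμ : μ ≠ 0) {ψ : ℤ → C2} (hψ : IsSol U μ ψ) (hout : Outgoing n0 ψ) (hne : ψ ≠ 0) :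
    HasEig n0 U μ := by
  refine ⟨resK n0 ψ, fun h => hne (hψ.eq_zero_of_apply_eq_zero hU hA2 hμ (m := 0) ?_), ?_⟩
  · ext i
    simpa [resK] using congrFun h (0, i)
  · rw [Kmat_mulVec_resK_of_outgoing hA1 hout]
    ext p
    exact congrFun (hψ p.1) p.2

/-- Outside `[n₀]` the coins are trivial, so `𝒰ψ = μψ` just shifts `⟨L|ψ⟩` left and `⟨R|ψ⟩`
right by one site with a factor `μ⁻¹`; the amplitudes are those that the equation at the boundary
sites `0` and `n₀` forces on `ψ(-1)` and `ψ(n₀+1)`. -/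
def outgoingExtension (n0 : ℕ) (U : ℤ → Matrix (Fin 2) (Fin 2) ℂ) (μ : ℂ)
    (v : Fin (n0 + 1) × Fin 2 → ℂ) (n : ℤ) : C2 :=
  if n < 0 then ![μ ^ n * (U 0 *ᵥ fun i => v (0, i)) 0, 0]
  else if h : n ≤ n0 then fun i => v (⟨n.toNat, by omega⟩, i)
  else ![0, μ ^ ((n0 : ℤ) - n) * (U n0 *ᵥ fun i => v (Fin.last n0, i)) 1]

section outgoingExtension

variable {μ : ℂ} {v : Fin (n0 + 1) × Fin 2 → ℂ}

lemma outgoingExtension_of_neg {n : ℤ} (hn : n < 0) :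
    outgoingExtension n0 U μ v n = ![μ ^ n * (U 0 *ᵥ fun i => v (0, i)) 0, 0] := by
  simp [outgoingExtension, hn]

lemma outgoingExtension_natCast (m : Fin (n0 + 1)) :
    outgoingExtension n0 U μ v (m : ℕ) = fun i => v (m, i) := by
  simp [outgoingExtension, m.is_le]

lemma outgoingExtension_of_gt {n : ℤ} (hn : n0 < n) :
    outgoingExtension n0 U μ v n =
      ![0, μ ^ ((n0 : ℤ) - n) * (U n0 *ᵥ fun i => v (Fin.last n0, i)) 1] := by
  simp [outgoingExtension, not_lt.mpr (show (0 : ℤ) ≤ n by omega), not_le.mpr hn]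

lemma resK_outgoingExtension : resK n0 (outgoingExtension n0 U μ v) = v := by
  ext ⟨m, i⟩
  simp [resK, outgoingExtension_natCast]

lemma outgoing_outgoingExtension (hL : v (0, 1) = 0) (hR : v (Fin.last n0, 0) = 0) :
    Outgoing n0 (outgoingExtension n0 U μ v) := by
  intro k
  rcases Nat.eq_zero_or_pos k with rfl | hk
  · have h0 := outgoingExtension_natCast (U := U) (μ := μ) (v := v) 0
    have hlast := outgoingExtension_natCast (U := U) (μ := μ) (v := v) (Fin.last n0)
    simp_all
  · rw [outgoingExtension_of_neg (by omega), outgoingExtension_of_gt (by omega)]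
    simp

lemma QWop_outgoingExtension_of_neg (hA1 : A1 n0 U) (hμ : μ ≠ 0) {n : ℤ} (hn : n < 0) :
    QWop U (outgoingExtension n0 U μ v) n = μ • outgoingExtension n0 U μ v n := by
  rw [outgoingExtension_of_neg hn]
  refine funext <| Fin.forall_fin_two.mpr ⟨?_, ?_⟩
  · rw [QWop_apply_zero]
    rcases (show n + 1 < 0 ∨ n = -1 by omega) with hn' | rfl
    · rw [hA1 _ (.inl hn'), outgoingExtension_of_neg hn']
      simp [zpow_add_one₀ hμ, mul_assoc, mul_comm]
    · have h0 := outgoingExtension_natCast (U := U) (μ := μ) (v := v) 0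
      simp_all
  · rw [QWop_apply_one, hA1 _ (.inl (by omega)), outgoingExtension_of_neg (by omega)]
    simp

lemma QWop_outgoingExtension_of_gt (hA1 : A1 n0 U) (hμ : μ ≠ 0) {n : ℤ} (hn : n0 < n) :
    QWop U (outgoingExtension n0 U μ v) n = μ • outgoingExtension n0 U μ v n := by
  rw [outgoingExtension_of_gt hn]
  refine funext <| Fin.forall_fin_two.mpr ⟨?_, ?_⟩
  · rw [QWop_apply_zero, hA1 _ (.inr (by omega)), outgoingExtension_of_gt (by omega)]
    simp
  · rw [QWop_apply_one]
    rcases (show n0 < n - 1 ∨ n = n0 + 1 by omega) with hn' | rfl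
    · rw [hA1 _ (.inr hn'), outgoingExtension_of_gt hn']
      simp [sub_sub_eq_add_sub, add_sub_right_comm, zpow_add_one₀ hμ, mul_assoc, mul_comm]
    · have hlast := outgoingExtension_natCast (U := U) (μ := μ) (v := v) (Fin.last n0)
      simp_all

end outgoingExtension

theorem exists_outgoing_of_hasEig (hA1 : A1 n0 U) {μ : ℂ} (hμ : μ ≠ 0) (h : HasEig n0 U μ) :
    ∃ ψ : ℤ → C2, ψ ≠ 0 ∧ Outgoing n0 ψ ∧ IsSol U μ ψ := by
  obtain ⟨v, hv, hKv⟩ := h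
  set ψ := outgoingExtension n0 U μ v
  have hres : resK n0 ψ = v := resK_outgoingExtension
  rw [← hres] at hKv hv
  have hL : v (0, 1) = 0 := by
    have := congrFun hKv (0, 1)
    rw [Kmat_mulVec_resK_one] at this
    simpa [hres, hμ] using this.symm
  have hR : v (Fin.last n0, 0) = 0 := by
    have := congrFun hKv (Fin.last n0, 0)
    rw [Kmat_mulVec_resK_zero] at this
    simpa [hres, hμ] using this.symm
  have hout : Outgoing n0 ψ := outgoing_outgoingExtension hL hR
  refine ⟨ψ, fun h => hv (by rw [h]; rfl), hout, fun n => ?_⟩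
  rcases lt_or_ge n 0 with hn | hn
  · exact QWop_outgoingExtension_of_neg hA1 hμ hn
  rcases lt_or_ge (n0 : ℤ) n with hn' | hn'
  · exact QWop_outgoingExtension_of_gt hA1 hμ hn'
  lift n to ℕ using hn
  rw [Kmat_mulVec_resK_of_outgoing hA1 hout] at hKv
  ext i
  exact congrFun hKv (⟨n, by omega⟩, i)

end QuantumWalk

/-- equivalent characterizations of resonances. -/
theorem stmt_7 (n0 : ℕ) (U : ℤ → Matrix (Fin 2) (Fin 2) ℂ)
    (hU : CoinsUnitary U) (hA1 : A1 n0 U) (hA2 : A2 U) (ξ : ℂ) :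
    ((∃ ψ : ℤ → C2, ψ ≠ 0 ∧ Outgoing n0 ψ ∧
        IsSol U (Complex.exp (-(Complex.I * ξ))) ψ) ↔
      HasEig n0 U (Complex.exp (-(Complex.I * ξ)))) ∧
    (HasEig n0 U (Complex.exp (-(Complex.I * ξ))) ↔ TT n0 U ξ 1 1 = 0) := by
  have hμ : exp (-(I * ξ)) ≠ 0 := exp_ne_zero _
  have hout_iff_eig : (∃ ψ : ℤ → C2, ψ ≠ 0 ∧ Outgoing n0 ψ ∧ IsSol U (exp (-(I * ξ))) ψ) ↔
      HasEig n0 U (exp (-(I * ξ))) :=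
    ⟨fun ⟨_, hne, hout, hψ⟩ => hasEig_of_outgoing hU hA1 hA2 hμ hψ hout hne,
      exists_outgoing_of_hasEig hA1 hμ⟩
  refine ⟨hout_iff_eig, hout_iff_eig.symm.trans ⟨fun ⟨_, hne, hout, hψ⟩ =>
    TT_one_one_eq_zero_of_outgoing hU hA2 hψ hout hne,
    exists_outgoing_of_TT_one_one_eq_zero hU hA1 hA2⟩⟩
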